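/- Let dim(·|·) be a bivariant Sylvester module rank function for a unital ring R and let M₁ ⊆ M₂ ⊆ M₃ ⊆ M₄ be left R-modules with dim(M₂|M₃) < +∞. Then dim(M₁|M₃) − dim(M₁|M₄) ≤ dim(M₂|M₃) − dim(M₂|M₄). In particular, if dim(M₂|M₃) = dim(M₂|M₄) < +∞, then dim(M₁|M₃) = dim(M₁|M₄). -/

import Mathlib

universe u
open scoped NNReal ENNReal

/-- A bivariant Sylvester module rank function for a unital ring `R`: to each pair of left
`R`-modules `N ⊆ M` (encoded as a submodule `N` of a module `M`) it assigns a value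
`d M N ∈ ℝ≥0∞`, thought of as `dim(N|M)`, satisfying isomorphism invariance, normalization,
direct sum additivity, the two continuity conditions, and additivity. -/
structure BivariantSylvesterRank (R : Type u) [Ring R] where
  d : ∀ (M : Type u) [AddCommGroup M] [Module R M], Submodule R M → ℝ≥0∞
  iso_invariant : ∀ (M N : Type u) [AddCommGroup M] [Module R M] [AddCommGroup N] [Module R N]
      (e : M ≃ₗ[R] N) (p : Submodule R M),
      d M p = d N (p.map (e : M →ₗ[R] N))
  d_zero : d PUnit ⊤ = 0
  d_ring : d R ⊤ = 1
  d_prod : ∀ (M N : Type u) [AddCommGroup M] [Module R M] [AddCommGroup N] [Module R N]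
      (p : Submodule R M) (q : Submodule R N),
      d (M × N) (p.prod q) = d M p + d N q
  continuity_sup : ∀ (M : Type u) [AddCommGroup M] [Module R M] (p : Submodule R M),
      d M p = ⨆ (p' : {p' : Submodule R M // p'.FG ∧ p' ≤ p}), d M p'.1
  continuity_inf : ∀ (M : Type u) [AddCommGroup M] [Module R M] (p : Submodule R M), p.FG →
      d M p = ⨅ (q : {q : Submodule R M // q.FG ∧ p ≤ q}), d q.1 (p.comap q.1.subtype)
  additivity : ∀ (M : Type u) [AddCommGroup M] [Module R M] (p : Submodule R M),
      d M ⊤ = d M p + d (M ⧸ p) ⊤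

namespace BivariantSylvesterRank

variable {R : Type u} [Ring R] (dim : BivariantSylvesterRank R)
variable {M N : Type u} [AddCommGroup M] [Module R M] [AddCommGroup N] [Module R N]

theorem d_top_congr (e : M ≃ₗ[R] N) : dim.d M ⊤ = dim.d N ⊤ := by
  rw [dim.iso_invariant M N e ⊤, Submodule.map_top, LinearEquiv.range]

theorem d_mono {p q : Submodule R M} (h : p ≤ q) : dim.d M p ≤ dim.d M q := by
  rw [dim.continuity_sup M p, dim.continuity_sup M q]
  exact iSup_le fun p' => le_iSup_of_le ⟨p'.1, p'.2.1, p'.2.2.trans h⟩ le_rfl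

theorem d_top_quot_le (p : Submodule R M) : dim.d (M ⧸ p) ⊤ ≤ dim.d M ⊤ := by
  rw [dim.additivity M p]; exact le_add_self

/-- auxiliary linear equivalence -/
def piSuccEquiv (n : ℕ) : (Fin (n+1) → R) ≃ₗ[R] R × (Fin n → R) :=
  { (Fin.consEquiv fun _ : Fin (n+1) => R).symm with
    map_add' := fun _ _ => rfl
    map_smul' := fun _ _ => rfl }

theorem d_pi_fin (n : ℕ) : dim.d (Fin n → R) ⊤ = n := by
  induction n with
  | zero =>
    haveI : Subsingleton (Fin 0 → R) := ⟨fun a b => funext fun i => i.elim0⟩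
    have e : PUnit.{u+1} ≃ₗ[R] (Fin 0 → R) :=
      LinearEquiv.ofLinear 0 0 (LinearMap.ext fun x => Subsingleton.elim _ _)
        (LinearMap.ext fun x => Subsingleton.elim _ _)
    rw [← dim.d_top_congr e, dim.d_zero]
    simp
  | succ n ih =>
    rw [dim.d_top_congr (piSuccEquiv (R := R) n), ← Submodule.prod_top, dim.d_prod, dim.d_ring, ih]
    push_cast
    ring

theorem d_top_ne_top (hM : Module.Finite R M) : dim.d M ⊤ ≠ ⊤ := by
  obtain ⟨n, f, hf⟩ := Module.Finite.exists_fin' R M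
  have h := dim.additivity (Fin n → R) (LinearMap.ker f)
  have e := f.quotKerEquivOfSurjective hf
  have hle : dim.d M ⊤ ≤ dim.d (Fin n → R) ⊤ := by
    rw [h, ← dim.d_top_congr e]
    exact le_add_self
  rw [dim.d_pi_fin] at hle
  exact ne_top_of_le_ne_top (ENNReal.natCast_ne_top n) hle

theorem d_fg_top_ne_top {q : Submodule R M} (hq : q.FG) : dim.d ↥q ⊤ ≠ ⊤ :=
  dim.d_top_ne_top (Module.Finite.iff_fg.mpr hq)

theorem d_map_inj (f : M →ₗ[R] N) (hf : Function.Injective f) (p q : Submodule R M) :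
    dim.d ↥(q.map f) ((p.map f).comap (q.map f).subtype) = dim.d ↥q (p.comap q.subtype) := by
  have hi := dim.iso_invariant ↥q ↥(q.map f) (Submodule.equivMapOfInjective f hf q)
      (p.comap q.subtype)
  rw [hi]
  congr 1
  ext ⟨y, hy⟩
  simp only [Submodule.mem_map, Submodule.mem_comap, Submodule.subtype_apply]
  constructor
  · rintro ⟨a, hap, ha⟩
    obtain ⟨b, hbq, hb⟩ := hy
    have hab : a = b := hf (by rw [ha, hb])
    refine ⟨⟨a, hab ▸ hbq⟩, hap, ?_⟩
    apply Subtype.ext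
    simpa [Submodule.coe_equivMapOfInjective_apply] using ha
  · rintro ⟨x, hxp, hxe⟩
    have hfx : f ↑x = y := by
      have := congrArg Subtype.val hxe
      simpa [Submodule.coe_equivMapOfInjective_apply] using this
    exact ⟨↑x, hxp, hfx⟩

theorem d_quot_map (f : M →ₗ[R] N) (S : Submodule R M) :
    dim.d (M ⧸ LinearMap.ker f) (S.map (LinearMap.ker f).mkQ) =
      dim.d ↥(LinearMap.range f) ((S.map f).comap (LinearMap.range f).subtype) := by
  rw [dim.iso_invariant _ _ f.quotKerEquivRange _]
  congr 1
  rw [← Submodule.map_comp]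
  ext ⟨y, hy⟩
  simp only [Submodule.mem_map, Submodule.mem_comap, Submodule.subtype_apply,
    LinearMap.coe_comp, Function.comp_apply, Submodule.mkQ_apply, LinearEquiv.coe_coe]
  constructor
  · rintro ⟨s, hs, hse⟩
    refine ⟨s, hs, ?_⟩
    have := congrArg Subtype.val hse
    rwa [LinearMap.quotKerEquivRange_apply_mk] at this
  · rintro ⟨s, hs, hse⟩
    refine ⟨s, hs, ?_⟩
    apply Subtype.ext
    rw [LinearMap.quotKerEquivRange_apply_mk]
    exact hse

theorem d_quot_restrict (P q S : Submodule R M) (hS : S ≤ q) :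
    dim.d (↥q ⧸ (P.comap q.subtype)) ((S.comap q.subtype).map (P.comap q.subtype).mkQ) =
      dim.d ↥(q.map P.mkQ) ((S.map P.mkQ).comap (q.map P.mkQ).subtype) := by
  have hker : LinearMap.ker (P.mkQ ∘ₗ q.subtype) = P.comap q.subtype := by
    rw [LinearMap.ker_comp, Submodule.ker_mkQ]
  have hrange : LinearMap.range (P.mkQ ∘ₗ q.subtype) = q.map P.mkQ := by
    rw [LinearMap.range_comp, Submodule.range_subtype]
  have hmap : (S.comap q.subtype).map (P.mkQ ∘ₗ q.subtype) = S.map P.mkQ := by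
    rw [Submodule.map_comp, Submodule.map_comap_subtype, inf_eq_right.mpr hS]
  have h := dim.d_quot_map (P.mkQ ∘ₗ q.subtype) (S.comap q.subtype)
  rw [hker, hrange, hmap] at h
  exact h

theorem d_quot_quot (D₀ D : Submodule R M) (h : D₀ ≤ D) (S : Submodule R M) :
    dim.d ((M ⧸ D₀) ⧸ (D.map D₀.mkQ)) ((S.map D₀.mkQ).map (D.map D₀.mkQ).mkQ) =
      dim.d (M ⧸ D) (S.map D.mkQ) := by
  rw [dim.iso_invariant _ _ (Submodule.quotientQuotientEquivQuotient D₀ D h) _]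
  congr 1
  rw [← Submodule.map_comp, ← Submodule.map_comp]
  congr 1

theorem fg_comap_subtype {p q : Submodule R M} (hp : p.FG) (h : p ≤ q) :
    (p.comap q.subtype).FG := by
  apply Submodule.fg_of_fg_map_injective q.subtype (Submodule.injective_subtype q)
  rwa [Submodule.map_comap_subtype, inf_eq_right.mpr h]

theorem d_le_restrict_fg {p q : Submodule R M} (hp : p.FG) (h : p ≤ q) :
    dim.d M p ≤ dim.d ↥q (p.comap q.subtype) := by
  rw [dim.continuity_inf M p hp,
    dim.continuity_inf ↥q (p.comap q.subtype) (fg_comap_subtype hp h)]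
  refine le_iInf fun r => ?_
  have hpmap : p = (p.comap q.subtype).map q.subtype := by
    rw [Submodule.map_comap_subtype, inf_eq_right.mpr h]
  have hr : p ≤ r.1.map q.subtype :=
    le_trans (le_of_eq hpmap) (Submodule.map_mono r.2.2)
  refine iInf_le_of_le ⟨r.1.map q.subtype, r.2.1.map _, hr⟩ ?_
  have heq := dim.d_map_inj q.subtype (Submodule.injective_subtype q) (p.comap q.subtype) r.1
  rw [Submodule.map_comap_subtype, inf_eq_right.mpr h] at heq
  exact le_of_eq heq

theorem d_le_restrict {p q : Submodule R M} (h : p ≤ q) :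
    dim.d M p ≤ dim.d ↥q (p.comap q.subtype) := by
  rw [dim.continuity_sup M p]
  refine iSup_le fun p' => ?_
  calc dim.d M p'.1 ≤ dim.d ↥q (p'.1.comap q.subtype) :=
        dim.d_le_restrict_fg p'.2.1 (p'.2.2.trans h)
    _ ≤ dim.d ↥q (p.comap q.subtype) := dim.d_mono (Submodule.comap_mono p'.2.2)

theorem d_restrict_anti {p q q' : Submodule R M} (hpq : p ≤ q) (hqq' : q ≤ q') :
    dim.d ↥q' (p.comap q'.subtype) ≤ dim.d ↥q (p.comap q.subtype) := by
  have h1 : p.comap q'.subtype ≤ q.comap q'.subtype := Submodule.comap_mono hpq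
  have h2 := dim.d_le_restrict (M := ↥q') h1
  have h3 := dim.d_map_inj q'.subtype (Submodule.injective_subtype q')
      (p.comap q'.subtype) (q.comap q'.subtype)
  rw [Submodule.map_comap_subtype, Submodule.map_comap_subtype,
    inf_eq_right.mpr (hpq.trans hqq'), inf_eq_right.mpr hqq'] at h3
  exact h2.trans (le_of_eq h3.symm)

theorem d_additivity_rel (hfin : dim.d M ⊤ ≠ ⊤) {P Q : Submodule R M} (h : P ≤ Q) :
    dim.d M Q = dim.d M P + dim.d (M ⧸ P) (Q.map P.mkQ) := by
  have h1 := dim.additivity M Q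
  have h2 := dim.additivity M P
  have h3 := dim.additivity (M ⧸ P) (Q.map P.mkQ)
  have h4 : dim.d ((M ⧸ P) ⧸ Q.map P.mkQ) ⊤ = dim.d (M ⧸ Q) ⊤ :=
    dim.d_top_congr (Submodule.quotientQuotientEquivQuotient P Q h)
  have hQtop : dim.d (M ⧸ Q) ⊤ ≠ ⊤ := ne_top_of_le_ne_top hfin (dim.d_top_quot_le Q)
  rw [h3, h4] at h2
  have h5 : dim.d M Q + dim.d (M ⧸ Q) ⊤ =
      (dim.d M P + dim.d (M ⧸ P) (Q.map P.mkQ)) + dim.d (M ⧸ Q) ⊤ := by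
    rw [add_assoc]
    exact h1.symm.trans h2
  exact WithTop.add_right_cancel hQtop h5

theorem d_mayer_vietoris (A K : Submodule R M) :
    dim.d (M ⧸ A) ⊤ + dim.d (M ⧸ K) ⊤ ≤ dim.d M ⊤ + dim.d (M ⧸ (A ⊔ K)) ⊤ := by
  set φ : M →ₗ[R] (M ⧸ A) × (M ⧸ K) := LinearMap.prod A.mkQ K.mkQ with hφ
  set ψ : (M ⧸ A) × (M ⧸ K) →ₗ[R] M ⧸ (A ⊔ K) :=
    LinearMap.coprod (Submodule.mapQ A (A ⊔ K) LinearMap.id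
        (by rw [Submodule.comap_id]; exact le_sup_left))
      (-(Submodule.mapQ K (A ⊔ K) LinearMap.id
        (by rw [Submodule.comap_id]; exact le_sup_right))) with hψ
  have hψs : Function.Surjective ψ := by
    intro z
    obtain ⟨x, rfl⟩ := (A ⊔ K).mkQ_surjective z
    refine ⟨(A.mkQ x, 0), ?_⟩
    simp [hψ, Submodule.mapQ_apply]
  have hker : LinearMap.ker ψ = LinearMap.range φ := by
    ext z
    obtain ⟨x, y, rfl⟩ : ∃ x y, (A.mkQ x, K.mkQ y) = z := by
      obtain ⟨x, hx⟩ := A.mkQ_surjective z.1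
      obtain ⟨y, hy⟩ := K.mkQ_surjective z.2
      exact ⟨x, y, by rw [hx, hy]⟩
    simp only [LinearMap.mem_ker, LinearMap.mem_range]
    constructor
    · intro h0
      have hxy : (A ⊔ K).mkQ (x - y) = 0 := by
        have : ψ (A.mkQ x, K.mkQ y) = (A ⊔ K).mkQ x - (A ⊔ K).mkQ y := by
          simp [hψ, Submodule.mapQ_apply, sub_eq_add_neg]
        rw [this] at h0
        rw [map_sub]
        exact h0
      rw [Submodule.mkQ_apply, Submodule.Quotient.mk_eq_zero] at hxy
      obtain ⟨a, ha, k, hk, hak⟩ := Submodule.mem_sup.mp hxy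
      refine ⟨x - a, ?_⟩
      have h1 : A.mkQ (x - a) = A.mkQ x := by
        rw [Submodule.mkQ_apply, Submodule.mkQ_apply, Submodule.Quotient.eq]
        simpa using A.neg_mem ha
      have h2 : K.mkQ (x - a) = K.mkQ y := by
        rw [Submodule.mkQ_apply, Submodule.mkQ_apply, Submodule.Quotient.eq]
        have : x - a - y = k := by
          rw [sub_right_comm, ← hak, add_sub_cancel_left]
        rw [this]; exact hk
      have hpr : φ (x - a) = (A.mkQ (x - a), K.mkQ (x - a)) := rfl
      rw [hpr, h1, h2]
    · rintro ⟨w, hw⟩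
      rw [← hw]
      show ψ (φ w) = 0
      simp [hψ, hφ, Submodule.mapQ_apply, sub_eq_add_neg]
  have h1 := dim.additivity ((M ⧸ A) × (M ⧸ K)) (LinearMap.range φ)
  have htop : dim.d ((M ⧸ A) × (M ⧸ K)) ⊤ = dim.d (M ⧸ A) ⊤ + dim.d (M ⧸ K) ⊤ := by
    rw [← Submodule.prod_top, dim.d_prod]
  have hquot : dim.d (((M ⧸ A) × (M ⧸ K)) ⧸ (LinearMap.range φ)) ⊤ =
      dim.d (M ⧸ (A ⊔ K)) ⊤ := by
    rw [← hker]
    exact dim.d_top_congr (ψ.quotKerEquivOfSurjective hψs)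
  have hrange : dim.d ((M ⧸ A) × (M ⧸ K)) (LinearMap.range φ) ≤ dim.d M ⊤ := by
    calc dim.d ((M ⧸ A) × (M ⧸ K)) (LinearMap.range φ)
        ≤ dim.d ↥(LinearMap.range φ)
            ((LinearMap.range φ).comap (LinearMap.range φ).subtype) :=
          dim.d_le_restrict le_rfl
      _ = dim.d ↥(LinearMap.range φ) ⊤ := by rw [Submodule.comap_subtype_self]
      _ = dim.d (M ⧸ LinearMap.ker φ) ⊤ := (dim.d_top_congr φ.quotKerEquivRange).symm
      _ ≤ dim.d M ⊤ := dim.d_top_quot_le _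
  calc dim.d (M ⧸ A) ⊤ + dim.d (M ⧸ K) ⊤
      = dim.d ((M ⧸ A) × (M ⧸ K)) ⊤ := htop.symm
    _ = dim.d ((M ⧸ A) × (M ⧸ K)) (LinearMap.range φ) +
        dim.d (((M ⧸ A) × (M ⧸ K)) ⧸ (LinearMap.range φ)) ⊤ := h1
    _ = dim.d ((M ⧸ A) × (M ⧸ K)) (LinearMap.range φ) + dim.d (M ⧸ (A ⊔ K)) ⊤ := by
        rw [hquot]
    _ ≤ dim.d M ⊤ + dim.d (M ⧸ (A ⊔ K)) ⊤ := add_le_add_left hrange _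

theorem d_quot_le_fin (hfin : dim.d M ⊤ ≠ ⊤) (K A : Submodule R M) :
    dim.d (M ⧸ K) (A.map K.mkQ) ≤ dim.d M A := by
  have hMV := dim.d_mayer_vietoris A K
  have h1 := dim.additivity M A
  have h2 := dim.additivity (M ⧸ K) (A.map K.mkQ)
  have hmapeq : A.map K.mkQ = (A ⊔ K).map K.mkQ := by
    rw [Submodule.map_sup, Submodule.mkQ_map_self, sup_bot_eq]
  have h4 : dim.d ((M ⧸ K) ⧸ A.map K.mkQ) ⊤ = dim.d (M ⧸ (A ⊔ K)) ⊤ := by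
    rw [hmapeq]
    exact dim.d_top_congr (Submodule.quotientQuotientEquivQuotient K (A ⊔ K) le_sup_right)
  rw [h2, h4] at hMV
  rw [h1] at hMV
  have hu : dim.d (M ⧸ A) ⊤ ≠ ⊤ := ne_top_of_le_ne_top hfin (dim.d_top_quot_le _)
  have hw : dim.d (M ⧸ (A ⊔ K)) ⊤ ≠ ⊤ := ne_top_of_le_ne_top hfin (dim.d_top_quot_le _)
  have key : dim.d (M ⧸ K) (A.map K.mkQ) + (dim.d (M ⧸ A) ⊤ + dim.d (M ⧸ (A ⊔ K)) ⊤) ≤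
      dim.d M A + (dim.d (M ⧸ A) ⊤ + dim.d (M ⧸ (A ⊔ K)) ⊤) := by
    calc dim.d (M ⧸ K) (A.map K.mkQ) + (dim.d (M ⧸ A) ⊤ + dim.d (M ⧸ (A ⊔ K)) ⊤)
        = dim.d (M ⧸ A) ⊤ + (dim.d (M ⧸ K) (A.map K.mkQ) + dim.d (M ⧸ (A ⊔ K)) ⊤) := by
          ring
      _ ≤ dim.d M A + dim.d (M ⧸ A) ⊤ + dim.d (M ⧸ (A ⊔ K)) ⊤ := hMV
      _ = dim.d M A + (dim.d (M ⧸ A) ⊤ + dim.d (M ⧸ (A ⊔ K)) ⊤) := by ring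
  exact (ENNReal.add_le_add_iff_right (ENNReal.add_ne_top.mpr ⟨hu, hw⟩)).mp key

theorem exists_fg_le_map {f : M →ₗ[R] N} {p : Submodule R M} {S : Submodule R N}
    (hS : S.FG) (hle : S ≤ p.map f) :
    ∃ p₀ : Submodule R M, p₀.FG ∧ p₀ ≤ p ∧ S ≤ p₀.map f := by
  obtain ⟨t, rfl⟩ := hS
  have hch : ∀ x : (t : Set N), ∃ y, y ∈ p ∧ f y = (x : N) := by
    intro x
    have hx : (x : N) ∈ p.map f := hle (Submodule.subset_span x.2)
    obtain ⟨y, hy, hfy⟩ := Submodule.mem_map.mp hx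
    exact ⟨y, hy, hfy⟩
  choose g hg1 hg2 using hch
  refine ⟨Submodule.span R (Set.range g), Submodule.fg_span (Set.finite_range g),
    Submodule.span_le.mpr ?_, ?_⟩
  · rintro _ ⟨x, rfl⟩
    exact hg1 x
  · rw [Submodule.span_le]
    intro x hx
    exact Submodule.mem_map.mpr
      ⟨g ⟨x, hx⟩, Submodule.subset_span ⟨⟨x, hx⟩, rfl⟩, hg2 ⟨x, hx⟩⟩

theorem d_quot_le_fg (K : Submodule R M) {A : Submodule R M} (hA : A.FG) :
    dim.d (M ⧸ K) (A.map K.mkQ) ≤ dim.d M A := by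
  rw [dim.continuity_inf M A hA]
  refine le_iInf fun q => ?_
  have hAq : A ≤ q.1 := q.2.2
  have hle : A.map K.mkQ ≤ q.1.map K.mkQ := Submodule.map_mono hAq
  have hfinq : dim.d ↥q.1 ⊤ ≠ ⊤ := dim.d_fg_top_ne_top q.2.1
  calc dim.d (M ⧸ K) (A.map K.mkQ)
      ≤ dim.d ↥(q.1.map K.mkQ) ((A.map K.mkQ).comap (q.1.map K.mkQ).subtype) :=
        dim.d_le_restrict hle
    _ = dim.d (↥q.1 ⧸ (K.comap q.1.subtype))
          ((A.comap q.1.subtype).map (K.comap q.1.subtype).mkQ) :=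
        (dim.d_quot_restrict K q.1 A hAq).symm
    _ ≤ dim.d ↥q.1 (A.comap q.1.subtype) :=
        dim.d_quot_le_fin hfinq (K.comap q.1.subtype) (A.comap q.1.subtype)

theorem d_quot_le (K A : Submodule R M) :
    dim.d (M ⧸ K) (A.map K.mkQ) ≤ dim.d M A := by
  rw [dim.continuity_sup (M ⧸ K) (A.map K.mkQ)]
  refine iSup_le fun S => ?_
  obtain ⟨A₀, hA₀fg, hA₀le, hSle⟩ := exists_fg_le_map S.2.1 S.2.2
  calc dim.d (M ⧸ K) S.1 ≤ dim.d (M ⧸ K) (A₀.map K.mkQ) := dim.d_mono hSle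
    _ ≤ dim.d M A₀ := dim.d_quot_le_fg K hA₀fg
    _ ≤ dim.d M A := dim.d_mono hA₀le

theorem d_quot_quot_le (P₀ P S : Submodule R M) (h : P₀ ≤ P) :
    dim.d (M ⧸ P) (S.map P.mkQ) ≤ dim.d (M ⧸ P₀) (S.map P₀.mkQ) := by
  have hq := dim.d_quot_le (M := M ⧸ P₀) (P.map P₀.mkQ) (S.map P₀.mkQ)
  rwa [dim.d_quot_quot P₀ P h S] at hq

theorem d_additivity_fg {P Q : Submodule R M} (hP : P.FG) (hQ : Q.FG) (h : P ≤ Q) :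
    dim.d M Q = dim.d M P + dim.d (M ⧸ P) (Q.map P.mkQ) := by
  refine le_antisymm ?_ ?_
  · -- d M Q ≤ d M P + d (M/P)(Q.map)
    have hQ' : (Q.map P.mkQ).FG := hQ.map _
    rw [dim.continuity_inf M P hP, dim.continuity_inf (M ⧸ P) (Q.map P.mkQ) hQ',
      ENNReal.iInf_add]
    refine le_iInf fun q₁ => ?_
    rw [ENNReal.add_iInf]
    refine le_iInf fun qb => ?_
    obtain ⟨C, hCfg, _, hCmap⟩ := exists_fg_le_map (f := P.mkQ) (p := (⊤ : Submodule R M))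
      qb.2.1 (by rw [Submodule.map_top, Submodule.range_mkQ]; exact le_top)
    set q := q₁.1 ⊔ Q ⊔ C with hq
    have hqfg : q.FG := (q₁.2.1.sup hQ).sup hCfg
    have hQq : Q ≤ q := le_sup_of_le_left le_sup_right
    have hPq : P ≤ q := le_sup_of_le_left (le_sup_of_le_left q₁.2.2)
    have hterm : dim.d M Q ≤ dim.d ↥q (Q.comap q.subtype) := by
      rw [dim.continuity_inf M Q hQ]
      exact iInf_le_of_le ⟨q, hqfg, hQq⟩ le_rfl
    have hfinq : dim.d ↥q ⊤ ≠ ⊤ := dim.d_fg_top_ne_top hqfg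
    have hLA := dim.d_additivity_rel hfinq
      (Submodule.comap_mono h : P.comap q.subtype ≤ Q.comap q.subtype)
    rw [dim.d_quot_restrict P q Q hQq] at hLA
    have hb1 : dim.d ↥q (P.comap q.subtype) ≤ dim.d ↥q₁.1 (P.comap q₁.1.subtype) :=
      dim.d_restrict_anti q₁.2.2 (le_sup_of_le_left le_sup_left)
    have hb2 : dim.d ↥(q.map P.mkQ) ((Q.map P.mkQ).comap (q.map P.mkQ).subtype) ≤
        dim.d ↥qb.1 ((Q.map P.mkQ).comap qb.1.subtype) :=
      dim.d_restrict_anti qb.2.2 (hCmap.trans (Submodule.map_mono le_sup_right))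
    calc dim.d M Q ≤ dim.d ↥q (Q.comap q.subtype) := hterm
      _ = dim.d ↥q (P.comap q.subtype) +
          dim.d ↥(q.map P.mkQ) ((Q.map P.mkQ).comap (q.map P.mkQ).subtype) := hLA
      _ ≤ dim.d ↥q₁.1 (P.comap q₁.1.subtype) +
          dim.d ↥qb.1 ((Q.map P.mkQ).comap qb.1.subtype) := add_le_add hb1 hb2
  · -- d M P + d (M/P)(Q.map) ≤ d M Q
    rw [dim.continuity_inf M Q hQ]
    refine le_iInf fun q => ?_
    have hPq : P ≤ q.1 := h.trans q.2.2
    have hfinq : dim.d ↥q.1 ⊤ ≠ ⊤ := dim.d_fg_top_ne_top q.2.1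
    have hLA := dim.d_additivity_rel hfinq
      (Submodule.comap_mono h : P.comap q.1.subtype ≤ Q.comap q.1.subtype)
    rw [dim.d_quot_restrict P q.1 Q q.2.2] at hLA
    rw [hLA]
    exact add_le_add (dim.d_le_restrict hPq) (dim.d_le_restrict (Submodule.map_mono q.2.2))

theorem d_inf_quot (hfin : dim.d M ⊤ ≠ ⊤) (D A : Submodule R M) :
    ⨅ (D₀ : {D₀ : Submodule R M // D₀.FG ∧ D₀ ≤ D}), dim.d (M ⧸ D₀.1) (A.map D₀.1.mkQ) ≤
      dim.d (M ⧸ D) (A.map D.mkQ) := by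
  haveI : Nonempty {D₀ : Submodule R M // D₀.FG ∧ D₀ ≤ D} :=
    ⟨⟨⊥, Submodule.fg_bot, bot_le⟩⟩
  set x := dim.d M D with hx'
  have hx : x ≠ ⊤ := ne_top_of_le_ne_top hfin (dim.d_mono le_top)
  have key : ∀ D₀ : {D₀ : Submodule R M // D₀.FG ∧ D₀ ≤ D},
      dim.d (M ⧸ D₀.1) (A.map D₀.1.mkQ) ≤
        (x - dim.d M D₀.1) + dim.d (M ⧸ D) (A.map D.mkQ) := by
    rintro ⟨D₀, hfg, hle⟩
    have hfin₀ : dim.d (M ⧸ D₀) ⊤ ≠ ⊤ := ne_top_of_le_ne_top hfin (dim.d_top_quot_le _)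
    have hLA := dim.d_additivity_rel hfin₀
      (Submodule.map_mono le_sup_right : D.map D₀.mkQ ≤ (A ⊔ D).map D₀.mkQ)
    rw [dim.d_quot_quot D₀ D hle (A ⊔ D)] at hLA
    have hsup : (A ⊔ D).map D.mkQ = A.map D.mkQ := by
      rw [Submodule.map_sup, Submodule.mkQ_map_self, sup_bot_eq]
    rw [hsup] at hLA
    have hbound : dim.d (M ⧸ D₀) (D.map D₀.mkQ) ≤ x - dim.d M D₀ := by
      rw [dim.continuity_sup (M ⧸ D₀) (D.map D₀.mkQ)]
      refine iSup_le fun S => ?_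
      obtain ⟨D₁', h₁fg, h₁le, hSle⟩ := exists_fg_le_map S.2.1 S.2.2
      have hD₁fg : (D₀ ⊔ D₁').FG := hfg.sup h₁fg
      have hD₁le : D₀ ⊔ D₁' ≤ D := sup_le hle h₁le
      have hFA := dim.d_additivity_fg hfg hD₁fg (le_sup_left : D₀ ≤ D₀ ⊔ D₁')
      have hxle : dim.d M D₀ + dim.d (M ⧸ D₀) ((D₀ ⊔ D₁').map D₀.mkQ) ≤ x := by
        rw [← hFA]
        exact dim.d_mono hD₁le
      refine le_trans (dim.d_mono (hSle.trans
        (Submodule.map_mono (le_sup_right : D₁' ≤ D₀ ⊔ D₁')))) ?_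
      exact ENNReal.le_sub_of_add_le_left
        (ne_top_of_le_ne_top hfin (dim.d_mono le_top)) hxle
    calc dim.d (M ⧸ D₀) (A.map D₀.mkQ)
        ≤ dim.d (M ⧸ D₀) ((A ⊔ D).map D₀.mkQ) := dim.d_mono (Submodule.map_mono le_sup_left)
      _ = dim.d (M ⧸ D₀) (D.map D₀.mkQ) + dim.d (M ⧸ D) (A.map D.mkQ) := hLA
      _ ≤ (x - dim.d M D₀) + dim.d (M ⧸ D) (A.map D.mkQ) := add_le_add_left hbound _
  calc (⨅ D₀ : {D₀ : Submodule R M // D₀.FG ∧ D₀ ≤ D}, dim.d (M ⧸ D₀.1) (A.map D₀.1.mkQ))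
      ≤ ⨅ D₀ : {D₀ : Submodule R M // D₀.FG ∧ D₀ ≤ D},
          ((x - dim.d M D₀.1) + dim.d (M ⧸ D) (A.map D.mkQ)) :=
        le_iInf fun D₀ => iInf_le_of_le D₀ (key D₀)
    _ = (⨅ D₀ : {D₀ : Submodule R M // D₀.FG ∧ D₀ ≤ D}, (x - dim.d M D₀.1)) +
        dim.d (M ⧸ D) (A.map D.mkQ) := by rw [ENNReal.iInf_add]
    _ = (x - ⨆ D₀ : {D₀ : Submodule R M // D₀.FG ∧ D₀ ≤ D}, dim.d M D₀.1) +
        dim.d (M ⧸ D) (A.map D.mkQ) := by rw [ENNReal.sub_iSup hx]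
    _ = (x - x) + dim.d (M ⧸ D) (A.map D.mkQ) := by rw [hx', dim.continuity_sup M D]
    _ = dim.d (M ⧸ D) (A.map D.mkQ) := by rw [tsub_self, zero_add]

theorem d_inf_quot' (P : Submodule R M) {Q₀ : Submodule R M} (hQ₀ : Q₀.FG) :
    ⨅ (P₀ : {P₀ : Submodule R M // P₀.FG ∧ P₀ ≤ P}), dim.d (M ⧸ P₀.1) (Q₀.map P₀.1.mkQ) ≤
      dim.d (M ⧸ P) (Q₀.map P.mkQ) := by
  rw [dim.continuity_inf (M ⧸ P) (Q₀.map P.mkQ) (hQ₀.map _)]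
  refine le_iInf fun qb => ?_
  obtain ⟨C', hC'fg, _, hC'map⟩ := exists_fg_le_map (f := P.mkQ) (p := (⊤ : Submodule R M))
    qb.2.1 (by rw [Submodule.map_top, Submodule.range_mkQ]; exact le_top)
  set C := Q₀ ⊔ C' with hCdef
  have hCfg : C.FG := hQ₀.sup hC'fg
  have hQ₀C : Q₀ ≤ C := le_sup_left
  have hCq : qb.1 ≤ C.map P.mkQ := hC'map.trans (Submodule.map_mono le_sup_right)
  have hfinC : dim.d ↥C ⊤ ≠ ⊤ := dim.d_fg_top_ne_top hCfg
  have hQC2 := dim.d_inf_quot hfinC (P.comap C.subtype) (Q₀.comap C.subtype)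
  rw [dim.d_quot_restrict P C Q₀ hQ₀C] at hQC2
  have hstep : (⨅ P₀ : {P₀ : Submodule R M // P₀.FG ∧ P₀ ≤ P},
        dim.d (M ⧸ P₀.1) (Q₀.map P₀.1.mkQ)) ≤
      ⨅ D₀ : {D₀ : Submodule R ↥C // D₀.FG ∧ D₀ ≤ P.comap C.subtype},
        dim.d (↥C ⧸ D₀.1) ((Q₀.comap C.subtype).map D₀.1.mkQ) := by
    refine le_iInf fun D₀ => ?_
    have hP₀le : D₀.1.map C.subtype ≤ P := by
      refine le_trans (Submodule.map_mono D₀.2.2) ?_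
      rw [Submodule.map_comap_subtype]
      exact inf_le_right
    refine iInf_le_of_le ⟨D₀.1.map C.subtype, D₀.2.1.map _, hP₀le⟩ ?_
    have hcomap : (D₀.1.map C.subtype).comap C.subtype = D₀.1 :=
      Submodule.comap_map_eq_of_injective (Submodule.injective_subtype C) _
    have hT := dim.d_quot_restrict (D₀.1.map C.subtype) C Q₀ hQ₀C
    rw [hcomap] at hT
    calc dim.d (M ⧸ D₀.1.map C.subtype) (Q₀.map (D₀.1.map C.subtype).mkQ)
        ≤ dim.d ↥(C.map (D₀.1.map C.subtype).mkQ)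
            ((Q₀.map (D₀.1.map C.subtype).mkQ).comap
              (C.map (D₀.1.map C.subtype).mkQ).subtype) :=
          dim.d_le_restrict (Submodule.map_mono hQ₀C)
      _ = dim.d (↥C ⧸ D₀.1) ((Q₀.comap C.subtype).map D₀.1.mkQ) := hT.symm
  refine hstep.trans (hQC2.trans ?_)
  exact dim.d_restrict_anti qb.2.2 hCq

theorem d_additivity' {P Q : Submodule R M} (h : P ≤ Q) :
    dim.d M Q = dim.d M P + dim.d (M ⧸ P) (Q.map P.mkQ) := by
  refine le_antisymm ?_ ?_
  · conv_lhs => rw [dim.continuity_sup M Q]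
    refine iSup_le fun Q₀ => ?_
    have key : ∀ P₀ : {P₀ : Submodule R M // P₀.FG ∧ P₀ ≤ P},
        dim.d M Q₀.1 ≤ dim.d M P + dim.d (M ⧸ P₀.1) (Q₀.1.map P₀.1.mkQ) := by
      rintro ⟨P₀, hfg, hle⟩
      have hFA := dim.d_additivity_fg hfg (hfg.sup Q₀.2.1) (le_sup_left : P₀ ≤ P₀ ⊔ Q₀.1)
      have hsup : (P₀ ⊔ Q₀.1).map P₀.mkQ = Q₀.1.map P₀.mkQ := by
        rw [Submodule.map_sup, Submodule.mkQ_map_self, bot_sup_eq]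
      rw [hsup] at hFA
      calc dim.d M Q₀.1 ≤ dim.d M (P₀ ⊔ Q₀.1) := dim.d_mono le_sup_right
        _ = dim.d M P₀ + dim.d (M ⧸ P₀) (Q₀.1.map P₀.mkQ) := hFA
        _ ≤ dim.d M P + dim.d (M ⧸ P₀) (Q₀.1.map P₀.mkQ) :=
            add_le_add_left (dim.d_mono hle) _
    have h1 : dim.d M Q₀.1 ≤ dim.d M P +
        ⨅ P₀ : {P₀ : Submodule R M // P₀.FG ∧ P₀ ≤ P},
          dim.d (M ⧸ P₀.1) (Q₀.1.map P₀.1.mkQ) := by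
      rw [ENNReal.add_iInf]
      exact le_iInf fun P₀ => key P₀
    refine h1.trans (add_le_add_right ?_ _)
    exact (dim.d_inf_quot' P Q₀.2.1).trans (dim.d_mono (Submodule.map_mono Q₀.2.2))
  · rw [dim.continuity_sup M P, dim.continuity_sup (M ⧸ P) (Q.map P.mkQ)]
    haveI : Nonempty {P₀ : Submodule R M // P₀.FG ∧ P₀ ≤ P} :=
      ⟨⟨⊥, Submodule.fg_bot, bot_le⟩⟩
    haveI : Nonempty {S : Submodule R (M ⧸ P) // S.FG ∧ S ≤ Q.map P.mkQ} :=
      ⟨⟨⊥, Submodule.fg_bot, bot_le⟩⟩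
    rw [ENNReal.iSup_add]
    refine iSup_le fun P₀ => ?_
    rw [ENNReal.add_iSup]
    refine iSup_le fun S => ?_
    obtain ⟨Q₁, hQ₁fg, hQ₁le, hSle⟩ := exists_fg_le_map S.2.1 S.2.2
    set Q' := P₀.1 ⊔ Q₁ with hQ'def
    have hQ'fg : Q'.FG := P₀.2.1.sup hQ₁fg
    have hQ'le : Q' ≤ Q := sup_le (P₀.2.2.trans h) hQ₁le
    have hFA := dim.d_additivity_fg P₀.2.1 hQ'fg (le_sup_left : P₀.1 ≤ Q')
    have hchain := dim.d_quot_quot_le P₀.1 P Q' P₀.2.2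
    calc dim.d M P₀.1 + dim.d (M ⧸ P) S.1
        ≤ dim.d M P₀.1 + dim.d (M ⧸ P) (Q'.map P.mkQ) :=
          add_le_add_right (dim.d_mono (hSle.trans (Submodule.map_mono le_sup_right))) _
      _ ≤ dim.d M P₀.1 + dim.d (M ⧸ P₀.1) (Q'.map P₀.1.mkQ) := add_le_add_right hchain _
      _ = dim.d M Q' := hFA.symm
      _ ≤ dim.d M Q := dim.d_mono hQ'le

end BivariantSylvesterRank

/-- Let `dim(·|·)` be a bivariant Sylvester module rank function for `R`
and let `M₁ ⊆ M₂ ⊆ M₃ ⊆ M₄` be modules (encoded as submodules `N₁ ≤ N₂ ≤ N₃` of `M₄`) with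
`dim(M₂|M₃) < +∞`. Then `dim(M₁|M₃) − dim(M₁|M₄) ≤ dim(M₂|M₃) − dim(M₂|M₄)` (stated in the
equivalent additive form `dim(M₁|M₃) + dim(M₂|M₄) ≤ dim(M₂|M₃) + dim(M₁|M₄)`); in
particular if `dim(M₂|M₃) = dim(M₂|M₄) < +∞` then `dim(M₁|M₃) = dim(M₁|M₄)`. -/
theorem bivariantSylvesterRank_stable (R : Type u) [Ring R]
    (dim : BivariantSylvesterRank R)
    (M₄ : Type u) [AddCommGroup M₄] [Module R M₄]
    (N₁ N₂ N₃ : Submodule R M₄) (h₁₂ : N₁ ≤ N₂) (h₂₃ : N₂ ≤ N₃)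
    (hfin : dim.d ↥N₃ (N₂.comap N₃.subtype) < ⊤) :
    (dim.d ↥N₃ (N₁.comap N₃.subtype) + dim.d M₄ N₂ ≤
        dim.d ↥N₃ (N₂.comap N₃.subtype) + dim.d M₄ N₁) ∧
      (dim.d ↥N₃ (N₂.comap N₃.subtype) = dim.d M₄ N₂ →
        dim.d ↥N₃ (N₁.comap N₃.subtype) = dim.d M₄ N₁) := by
  have h₁₃ : N₁ ≤ N₃ := h₁₂.trans h₂₃
  have hA1 : dim.d M₄ N₁ ≤ dim.d ↥N₃ (N₁.comap N₃.subtype) := dim.d_le_restrict h₁₃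
  have hFA3 := dim.d_additivity' (M := ↥N₃)
    (Submodule.comap_mono h₁₂ : N₁.comap N₃.subtype ≤ N₂.comap N₃.subtype)
  rw [dim.d_quot_restrict N₁ N₃ N₂ h₂₃] at hFA3
  have hFA4 := dim.d_additivity' h₁₂
  have hc : dim.d (M₄ ⧸ N₁) (N₂.map N₁.mkQ) ≤
      dim.d ↥(N₃.map N₁.mkQ) ((N₂.map N₁.mkQ).comap (N₃.map N₁.mkQ).subtype) :=
    dim.d_le_restrict (Submodule.map_mono h₂₃)
  have hmain : dim.d ↥N₃ (N₁.comap N₃.subtype) + dim.d M₄ N₂ ≤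
      dim.d ↥N₃ (N₂.comap N₃.subtype) + dim.d M₄ N₁ := by
    rw [hFA3, hFA4]
    calc dim.d ↥N₃ (N₁.comap N₃.subtype) +
          (dim.d M₄ N₁ + dim.d (M₄ ⧸ N₁) (N₂.map N₁.mkQ))
        ≤ dim.d ↥N₃ (N₁.comap N₃.subtype) + (dim.d M₄ N₁ +
            dim.d ↥(N₃.map N₁.mkQ) ((N₂.map N₁.mkQ).comap (N₃.map N₁.mkQ).subtype)) :=
          add_le_add_right (add_le_add_right hc _) _
      _ = dim.d ↥N₃ (N₁.comap N₃.subtype) +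
            dim.d ↥(N₃.map N₁.mkQ) ((N₂.map N₁.mkQ).comap (N₃.map N₁.mkQ).subtype) +
            dim.d M₄ N₁ := by ring
  refine ⟨hmain, fun heq => ?_⟩
  refine le_antisymm ?_ hA1
  have h' := hmain
  rw [heq] at h'
  have hb₂ : dim.d M₄ N₂ ≠ ⊤ := by rw [← heq]; exact hfin.ne
  exact (ENNReal.add_le_add_iff_right hb₂).mp (h'.trans_eq (add_comm _ _))
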